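/- arXiv:2505.07466 — 2 statements merged into one kernel-verified Lean document; each statement's English description precedes it below -/
import Mathlib

section
/- Second step of the singular-part recursion, case 1: assume A = Φ * Ψ in AddMonoidAlgebra ℝ ℝ with data as in the context and N ≥ 2, L ≥ 2, K ≥ 2. If β₂ ≠ ζ₁ + κ₂, then β₂ = ζ₂ + κ₁ and α₂ = φ₂·ψ₁; equivalently, ζ₂ = β₂ − κ₁ and φ₂ = α₂/ψ₁. -/
/-!
Because the coefficients `φ l`, `ψ k` are positive, no cancellation occurs in `Φ * Ψ`, so the
support `{β n}` of `A` is the sumset `{ζ l} + {κ k}`. The least element of this sumset is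
`ζ₁ + κ₁` and the next one is `min (ζ₂ + κ₁) (ζ₁ + κ₂)`. Under the case hypothesis it is
`ζ₂ + κ₁ < ζ₁ + κ₂`, which is then attained only by the pair `(2, 1)`, so comparing coefficients
at `β₂` gives `α₂ = φ₂ ψ₁`. (Indices are 1-based as in the paper: `ζ₁` is `ζ ⟨0, _⟩`.)
-/

open scoped Pointwise

namespace AddMonoidAlgebra

variable {ι ι' G R : Type*} [Fintype ι] [Fintype ι'] [Semiring R]

theorem coeff_sum_single_apply [DecidableEq G] (β : ι → G) (α : ι → R) (x : G) :
    (∑ n, single (β n) (α n)).coeff x = ∑ n, if β n = x then α n else 0 := by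
  simp [coeff_sum, Finsupp.finsetSum_apply, coeff_single, Finsupp.single_apply]

theorem coeff_sum_single_apply_of_injective {β : ι → G} (hβ : Function.Injective β)
    (α : ι → R) (n : ι) : (∑ m, single (β m) (α m)).coeff (β n) = α n := by
  classical
  rw [coeff_sum_single_apply]
  simp [hβ.eq_iff]

theorem coe_support_coeff_sum_single {β : ι → G} (hβ : Function.Injective β) {α : ι → R}
    (hα : ∀ n, α n ≠ 0) :
    ((∑ n, single (β n) (α n)).coeff.support : Set G) = Set.range β := by
  classical
  ext x
  simp only [Finset.mem_coe, Finsupp.mem_support_iff, Set.mem_range]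
  refine ⟨fun hx => ?_, ?_⟩
  · by_contra! h
    exact hx (by rw [coeff_sum_single_apply]; simp [h])
  · rintro ⟨n, rfl⟩
    rw [coeff_sum_single_apply_of_injective hβ]
    exact hα n

theorem coeff_sum_single_mul_sum_single [AddMonoid G] [DecidableEq G] (ζ : ι → G) (φ : ι → R)
    (κ : ι' → G) (ψ : ι' → R) (x : G) :
    ((∑ l, single (ζ l) (φ l)) * ∑ k, single (κ k) (ψ k)).coeff x =
      ∑ l, ∑ k, if ζ l + κ k = x then φ l * ψ k else 0 := by
  simp only [Finset.sum_mul_sum, single_mul_single, coeff_sum, coeff_single,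
    Finsupp.finsetSum_apply, Finsupp.single_apply]

theorem coeff_sum_single_mul_sum_single_of_forall_add_eq_iff [AddMonoid G] (ζ : ι → G) (φ : ι → R)
    (κ : ι' → G) (ψ : ι' → R) {x : G} {l₁ : ι} {k₁ : ι'}
    (hx : ∀ l k, ζ l + κ k = x ↔ l = l₁ ∧ k = k₁) :
    ((∑ l, single (ζ l) (φ l)) * ∑ k, single (κ k) (ψ k)).coeff x = φ l₁ * ψ k₁ := by
  classical
  simp [coeff_sum_single_mul_sum_single, hx, ite_and]

theorem coe_support_coeff_sum_single_mul_sum_single [AddMonoid G] [PartialOrder R]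
    [IsStrictOrderedRing R] {ζ : ι → G} {φ : ι → R} {κ : ι' → G} {ψ : ι' → R} (hφ : ∀ l, 0 < φ l)
    (hψ : ∀ k, 0 < ψ k) :
    (((∑ l, single (ζ l) (φ l)) * ∑ k, single (κ k) (ψ k)).coeff.support : Set G) =
      Set.range ζ + Set.range κ := by
  classical
  ext x
  have hnonneg (l k) : 0 ≤ if ζ l + κ k = x then φ l * ψ k else 0 := by
    split_ifs
    exacts [(mul_pos (hφ l) (hψ k)).le, le_rfl]
  simp only [Finset.mem_coe, Finsupp.mem_support_iff, coeff_sum_single_mul_sum_single,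
    Set.mem_add, Set.exists_range_iff]
  rw [Ne, Finset.sum_eq_zero_iff_of_nonneg fun l _ => Finset.sum_nonneg fun k _ => hnonneg l k]
  simp_rw [Finset.sum_eq_zero_iff_of_nonneg fun k _ => hnonneg _ k]
  simp [fun l k => (mul_pos (hφ l) (hψ k)).ne']

end AddMonoidAlgebra

theorem StrictMono.le_apply_of_covBy_of_apply_lt {ι α : Type*} [LinearOrder ι] [Preorder α]
    {f : ι → α} (hf : StrictMono f) {i₀ i₁ i : ι} (hi : i₀ ⋖ i₁) (h : f i₀ < f i) :
    f i₁ ≤ f i :=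
  hf.monotone (hi.ge_of_gt (hf.lt_iff_lt.mp h))

section Sumset

variable {ι ι' ι'' G : Type*} [LinearOrder ι] [LinearOrder ι'] [LinearOrder ι'']
  [AddCommMonoid G] [LinearOrder G] [IsOrderedCancelAddMonoid G]
  {β : ι'' → G} {ζ : ι → G} {κ : ι' → G} {i₀ i₁ : ι''} {l₀ l₁ l : ι} {k₀ k₁ k : ι'}

theorem min_add_le_add_of_ne_bot (hζ : Monotone ζ) (hκ : Monotone κ) (hl₀ : IsBot l₀)
    (hl : l₀ ⋖ l₁) (hk₀ : IsBot k₀) (hk : k₀ ⋖ k₁) (h : l ≠ l₀ ∨ k ≠ k₀) :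
    min (ζ l₁ + κ k₀) (ζ l₀ + κ k₁) ≤ ζ l + κ k := by
  rcases h with h | h
  · exact min_le_of_left_le (add_le_add (hζ (hl.ge_of_gt ((hl₀ l).lt_of_ne' h))) (hκ (hk₀ k)))
  · exact min_le_of_right_le (add_le_add (hζ (hl₀ l)) (hκ (hk.ge_of_gt ((hk₀ k).lt_of_ne' h))))

theorem add_eq_add_iff_of_lt (hζ : StrictMono ζ) (hκ : Monotone κ) (hl₀ : IsBot l₀)
    (hk₀ : IsBot k₀) (hk : k₀ ⋖ k₁) (hlt : ζ l₁ + κ k₀ < ζ l₀ + κ k₁) :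
    ζ l + κ k = ζ l₁ + κ k₀ ↔ l = l₁ ∧ k = k₀ := by
  refine ⟨fun h => ?_, fun ⟨hl, hk⟩ => hl ▸ hk ▸ rfl⟩
  obtain rfl : k = k₀ := by
    by_contra hne
    have : ζ l₀ + κ k₁ ≤ ζ l + κ k :=
      add_le_add (hζ.monotone (hl₀ l)) (hκ (hk.ge_of_gt ((hk₀ k).lt_of_ne' hne)))
    exact (this.trans_eq h).not_gt hlt
  exact ⟨hζ.injective (add_right_cancel h), rfl⟩

theorem apply_bot_eq_add_of_range_eq_add (hrange : Set.range β = Set.range ζ + Set.range κ)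
    (hβ : Monotone β) (hζ : Monotone ζ) (hκ : Monotone κ)
    (hi₀ : IsBot i₀) (hl₀ : IsBot l₀) (hk₀ : IsBot k₀) : β i₀ = ζ l₀ + κ k₀ := by
  obtain ⟨n, hn⟩ : ζ l₀ + κ k₀ ∈ Set.range β := hrange ▸ Set.add_mem_add ⟨l₀, rfl⟩ ⟨k₀, rfl⟩
  obtain ⟨_, ⟨l, rfl⟩, _, ⟨k, rfl⟩, hlk⟩ : β i₀ ∈ Set.range ζ + Set.range κ :=
    hrange ▸ ⟨i₀, rfl⟩
  exact le_antisymm (hn ▸ hβ (hi₀ n)) (hlk ▸ add_le_add (hζ (hl₀ l)) (hκ (hk₀ k)))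

theorem apply_second_eq_min_of_range_eq_add
    (hrange : Set.range β = Set.range ζ + Set.range κ) (hβ : StrictMono β) (hζ : StrictMono ζ)
    (hκ : StrictMono κ) (hi₀ : IsBot i₀) (hi : i₀ ⋖ i₁) (hl₀ : IsBot l₀) (hl : l₀ ⋖ l₁)
    (hk₀ : IsBot k₀) (hk : k₀ ⋖ k₁) : β i₁ = min (ζ l₁ + κ k₀) (ζ l₀ + κ k₁) := by
  have hβ₀ :=
    apply_bot_eq_add_of_range_eq_add hrange hβ.monotone hζ.monotone hκ.monotone hi₀ hl₀ hk₀
  have hle (l k) (h : ζ l₀ + κ k₀ < ζ l + κ k) : β i₁ ≤ ζ l + κ k := by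
    obtain ⟨n, hn⟩ : ζ l + κ k ∈ Set.range β := hrange ▸ Set.add_mem_add ⟨l, rfl⟩ ⟨k, rfl⟩
    rw [← hn] at h ⊢
    exact hβ.le_apply_of_covBy_of_apply_lt hi (hβ₀ ▸ h)
  obtain ⟨_, ⟨l, rfl⟩, _, ⟨k, rfl⟩, hlk⟩ : β i₁ ∈ Set.range ζ + Set.range κ :=
    hrange ▸ ⟨i₁, rfl⟩
  refine le_antisymm (le_min (hle _ _ ?_) (hle _ _ ?_)) ?_
  · exact add_lt_add_left (hζ hl.lt) _
  · exact add_lt_add_right (hκ hk.lt) _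
  rw [← hlk]
  refine min_add_le_add_of_ne_bot hζ.monotone hκ.monotone hl₀ hl hk₀ hk (not_and_or.mp ?_)
  rintro ⟨rfl, rfl⟩
  exact (hβ hi.lt).ne (hβ₀.trans hlk)

theorem apply_second_eq_add_of_range_eq_add_of_ne
    (hrange : Set.range β = Set.range ζ + Set.range κ) (hβ : StrictMono β) (hζ : StrictMono ζ)
    (hκ : StrictMono κ) (hi₀ : IsBot i₀) (hi : i₀ ⋖ i₁) (hl₀ : IsBot l₀) (hl : l₀ ⋖ l₁)
    (hk₀ : IsBot k₀) (hk : k₀ ⋖ k₁) (hne : β i₁ ≠ ζ l₀ + κ k₁) :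
    β i₁ = ζ l₁ + κ k₀ ∧ ζ l₁ + κ k₀ < ζ l₀ + κ k₁ := by
  have hmin := apply_second_eq_min_of_range_eq_add hrange hβ hζ hκ hi₀ hi hl₀ hl hk₀ hk
  rcases min_choice (ζ l₁ + κ k₀) (ζ l₀ + κ k₁) with h | h
  · rw [h] at hmin
    exact ⟨hmin, (min_eq_left_iff.mp h).lt_of_ne (hmin ▸ hne)⟩
  · exact absurd (hmin.trans h) hne

end Sumset

theorem Fin.isBot_mk_zero {n : ℕ} (hn : 0 < n) : IsBot (⟨0, hn⟩ : Fin n) :=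
  fun _ => Nat.zero_le _

theorem Fin.mk_zero_covBy_mk_one {n : ℕ} (hn : 1 < n) : (⟨0, by omega⟩ : Fin n) ⋖ ⟨1, hn⟩ := by
  simp

open AddMonoidAlgebra in
/-- Second step of the singular-part recursion, case 1: if `A = Φ * Ψ` with the
leaf-peeling singular data and `β₂ ≠ ζ₁ + κ₂`, then `β₂ = ζ₂ + κ₁` and
`α₂ = φ₂·ψ₁`; equivalently, `ζ₂ = β₂ − κ₁` and `φ₂ = α₂ / ψ₁`. -/
theorem singular_recursion_second_step_case1
    (N L K : ℕ) (hN : 2 ≤ N) (hL : 2 ≤ L) (hK : 2 ≤ K)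
    (β : Fin N → ℝ) (ζ : Fin L → ℝ) (κ : Fin K → ℝ)
    (hβ : StrictMono β) (hζ : StrictMono ζ) (hκ : StrictMono κ)
    (α : Fin N → ℝ) (φ : Fin L → ℝ) (ψ : Fin K → ℝ)
    (hα : ∀ n, α n ≠ 0) (hφ : ∀ l, 0 < φ l) (hψ : ∀ k, 0 < ψ k)
    (A Φ Ψ : AddMonoidAlgebra ℝ ℝ)
    (hA : A = ∑ n, AddMonoidAlgebra.single (β n) (α n))
    (hΦ : Φ = ∑ l, AddMonoidAlgebra.single (ζ l) (φ l))
    (hΨ : Ψ = ∑ k, AddMonoidAlgebra.single (κ k) (ψ k))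
    (hSing : A = Φ * Ψ)
    (hcase : β ⟨1, hN⟩ ≠ ζ ⟨0, by omega⟩ + κ ⟨1, hK⟩) :
    β ⟨1, hN⟩ = ζ ⟨1, hL⟩ + κ ⟨0, by omega⟩ ∧
      α ⟨1, hN⟩ = φ ⟨1, hL⟩ * ψ ⟨0, by omega⟩ ∧
      ζ ⟨1, hL⟩ = β ⟨1, hN⟩ - κ ⟨0, by omega⟩ ∧
      φ ⟨1, hL⟩ = α ⟨1, hN⟩ / ψ ⟨0, by omega⟩ := by
  have hrange : Set.range β = Set.range ζ + Set.range κ := by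
    rw [← coe_support_coeff_sum_single hβ.injective hα, ← hA, hSing, hΦ, hΨ,
      coe_support_coeff_sum_single_mul_sum_single hφ hψ]
  obtain ⟨hstep, hlt⟩ := apply_second_eq_add_of_range_eq_add_of_ne hrange hβ hζ hκ
    (Fin.isBot_mk_zero _) (Fin.mk_zero_covBy_mk_one hN) (Fin.isBot_mk_zero _)
    (Fin.mk_zero_covBy_mk_one hL) (Fin.isBot_mk_zero _) (Fin.mk_zero_covBy_mk_one hK) hcase
  have hcoef : α ⟨1, hN⟩ = φ ⟨1, hL⟩ * ψ ⟨0, by omega⟩ := by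
    rw [← coeff_sum_single_apply_of_injective hβ.injective α, ← hA, hSing, hΦ, hΨ, hstep,
      coeff_sum_single_mul_sum_single_of_forall_add_eq_iff _ _ _ _ fun l k =>
        add_eq_add_iff_of_lt hζ hκ.monotone (Fin.isBot_mk_zero _) (Fin.isBot_mk_zero _)
          (Fin.mk_zero_covBy_mk_one hK) hlt]
  exact ⟨hstep, hcoef, eq_sub_of_add_eq hstep.symm, eq_div_of_mul_eq (hψ _).ne' hcoef.symm⟩
end

section
/- General step of the singular-part recursion: assume A = Φ * Ψ in AddMonoidAlgebra ℝ ℝ with data as in the context. Then for every p with 1 ≤ p < L, the set S_p = { x ∈ supp A : A(x) ≠ Σ_{l=1}^p φₗ·Ψ(x − ζₗ) } is nonempty, its minimum satisfies min S_p = ζ_{p+1} + κ₁, and φ_{p+1} = ( A(ζ_{p+1}+κ₁) − Σ_{l=1}^p φₗ·Ψ(ζ_{p+1}+κ₁−ζₗ) ) / ψ₁. Hence, knowing {αₙ, βₙ}, {ψₖ, κₖ} and the already recovered pairs {φₗ, ζₗ}_{l=1}^p, one recovers {φ_{p+1}, ζ_{p+1}}, and by induction all pairs {φₗ, ζₗ}_{l=1}^L.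 -/
/-!
Split `Φ = Φ_{≤p} + Φ_{>p}` (one-based indices). The sum in the definition of `S_p` is the
coefficient of `Φ_{≤p} * Ψ`, so `A(x)` differs from it exactly by the coefficient of
`Φ_{>p} * Ψ` at `x`. The support of `Φ_{>p}` starts at `ζ_{p+1}` and that of `Ψ` at `κ₁`, so
this product vanishes below `ζ_{p+1} + κ₁` and has the single lowest term `φ_{p+1} ψ₁` there.
Positivity of all coefficients keeps `A(ζ_{p+1} + κ₁)` from cancelling to zero.
-/

open Finset

namespace AddMonoidAlgebra

section LowestTerm

variable {k G : Type*} [Semiring k] [Add G] {f g : AddMonoidAlgebra k G} {a b : G}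

theorem coeff_mul_add_of_forall_le [PartialOrder G] [AddLeftStrictMono G] [AddRightStrictMono G]
    (ha : ∀ x ∈ f.coeff.support, a ≤ x) (hb : ∀ y ∈ g.coeff.support, b ≤ y) :
    (f * g).coeff (a + b) = f.coeff a * g.coeff b :=
  coeff_mul_add_of_uniqueAdd fun _ _ hx hy h =>
    ((add_eq_add_iff_eq_and_eq (ha _ hx) (hb _ hy)).1 h.symm).imp Eq.symm Eq.symm

theorem add_le_of_mem_support_mul [Preorder G] [AddLeftMono G] [AddRightMono G]
    (ha : ∀ x ∈ f.coeff.support, a ≤ x) (hb : ∀ y ∈ g.coeff.support, b ≤ y) {z : G}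
    (hz : z ∈ (f * g).coeff.support) : a + b ≤ z := by
  classical
  obtain ⟨x, hx, y, hy, rfl⟩ := Finset.mem_add.1 (support_coeff_mul_subset f g hz)
  exact add_le_add (ha x hx) (hb y hy)

end LowestTerm

section SumSingle

variable {ι k G : Type*} [Semiring k] {s : Finset ι} {g : ι → G} {c : ι → k}

theorem coeff_sum_single [DecidableEq G] (x : G) :
    (∑ i ∈ s, single (g i) (c i)).coeff x = ∑ i ∈ s, if g i = x then c i else 0 := by
  simp only [coeff_sum, Finsupp.finsetSum_apply, coeff_single, Finsupp.single_apply]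

theorem coeff_sum_single_of_injOn (hg : Set.InjOn g s) {j : ι} (hj : j ∈ s) :
    (∑ i ∈ s, single (g i) (c i)).coeff (g j) = c j := by
  classical
  rw [coeff_sum_single, sum_eq_single_of_mem j hj fun i hi hij => if_neg (hij ∘ hg hi hj),
    if_pos rfl]

theorem le_of_mem_support_sum_single [Preorder G] {b : G} (hb : ∀ i ∈ s, b ≤ g i) {x : G}
    (hx : x ∈ (∑ i ∈ s, single (g i) (c i)).coeff.support) : b ≤ x := by
  classical
  rw [Finsupp.mem_support_iff, coeff_sum_single] at hx
  obtain ⟨i, hi, hne⟩ := exists_ne_zero_of_sum_ne_zero hx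
  exact (ite_ne_right_iff.1 hne).1 ▸ hb i hi

theorem coeff_sum_single_nonneg [PartialOrder k] [IsOrderedAddMonoid k]
    (hc : ∀ i ∈ s, 0 ≤ c i) (x : G) : 0 ≤ (∑ i ∈ s, single (g i) (c i)).coeff x := by
  classical
  rw [coeff_sum_single]
  exact sum_nonneg fun i hi => by split_ifs <;> simp [hc i hi]

theorem coeff_sum_single_mul [AddCommGroup G] (Ψ : AddMonoidAlgebra k G) (x : G) :
    ((∑ i ∈ s, single (g i) (c i)) * Ψ).coeff x = ∑ i ∈ s, c i * Ψ.coeff (x - g i) := by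
  simp only [sum_mul, coeff_sum, Finsupp.finsetSum_apply, coeff_single_mul_apply, neg_add_eq_sub]

end SumSingle

end AddMonoidAlgebra

open AddMonoidAlgebra

theorem isLeast_support_ne_of_eq_add {G R : Type*} [Preorder G] [AddCommMonoid R] [PartialOrder R]
    [IsOrderedCancelAddMonoid R] {a : G →₀ R} {f g : G → R} (hfg : ∀ x, a x = f x + g x) {z : G}
    (hfz : 0 ≤ f z) (hgz : 0 < g z) (hg : ∀ x, g x ≠ 0 → z ≤ x) :
    IsLeast {x | x ∈ a.support ∧ a x ≠ f x} z := by
  refine ⟨⟨?_, ?_⟩, fun x ⟨_, hx⟩ => hg x fun h => hx (by rw [hfg, h, add_zero])⟩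
  · rw [Finsupp.mem_support_iff, hfg]
    exact (add_pos_of_nonneg_of_pos hfz hgz).ne'
  · rw [hfg]
    exact fun h => hgz.ne' (add_eq_left.1 h)

theorem singular_recursion_general_step_general
    (L K : ℕ) (hK : 0 < K)
    (ζ : Fin L → ℝ) (κ : Fin K → ℝ)
    (hζ : StrictMono ζ) (hκ : StrictMono κ)
    (φ : Fin L → ℝ) (ψ : Fin K → ℝ)
    (hφ : ∀ l, 0 < φ l) (hψ : ∀ k, 0 < ψ k)
    (A Φ Ψ : AddMonoidAlgebra ℝ ℝ)
    (hΦ : Φ = ∑ l, AddMonoidAlgebra.single (ζ l) (φ l))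
    (hΨ : Ψ = ∑ k, AddMonoidAlgebra.single (κ k) (ψ k))
    (hSing : A = Φ * Ψ)
    (p : ℕ) (hpL : p < L) :
    (({x : ℝ | x ∈ A.coeff.support ∧
        A.coeff x ≠ ∑ l ∈ Finset.univ.filter (fun l : Fin L => (l : ℕ) < p),
          φ l * Ψ.coeff (x - ζ l)} : Set ℝ).Nonempty) ∧
    IsLeast {x : ℝ | x ∈ A.coeff.support ∧
        A.coeff x ≠ ∑ l ∈ Finset.univ.filter (fun l : Fin L => (l : ℕ) < p),
          φ l * Ψ.coeff (x - ζ l)}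
      (ζ ⟨p, hpL⟩ + κ ⟨0, hK⟩) ∧
    φ ⟨p, hpL⟩ =
      (A.coeff (ζ ⟨p, hpL⟩ + κ ⟨0, hK⟩) -
        ∑ l ∈ Finset.univ.filter (fun l : Fin L => (l : ℕ) < p),
          φ l * Ψ.coeff (ζ ⟨p, hpL⟩ + κ ⟨0, hK⟩ - ζ l)) / ψ ⟨0, hK⟩ := by
  set P : Fin L := ⟨p, hpL⟩
  set k₀ : Fin K := ⟨0, hK⟩
  set Φtail := ∑ l ∈ univ.filter (fun l : Fin L => ¬ (l : ℕ) < p), single (ζ l) (φ l)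
  have hΨ_ge : ∀ y ∈ Ψ.coeff.support, κ k₀ ≤ y := fun y hy =>
    le_of_mem_support_sum_single (fun k _ => hκ.monotone (Fin.mk_le_of_le_val k.val.zero_le))
      (hΨ ▸ hy)
  have hΦtail_ge : ∀ x ∈ Φtail.coeff.support, ζ P ≤ x := fun x hx =>
    le_of_mem_support_sum_single (fun l hl => hζ.monotone (not_lt.1 (mem_filter.1 hl).2)) hx
  have hsplit : ∀ x, A.coeff x =
      (∑ l ∈ univ.filter (fun l : Fin L => (l : ℕ) < p), φ l * Ψ.coeff (x - ζ l)) +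
        (Φtail * Ψ).coeff x := fun x => by
    rw [hSing, hΦ, ← sum_filter_add_sum_filter_not univ (fun l : Fin L => (l : ℕ) < p), add_mul,
      coeff_add, Finsupp.add_apply, coeff_sum_single_mul]
  have hlowest : (Φtail * Ψ).coeff (ζ P + κ k₀) = φ P * ψ k₀ := by
    rw [coeff_mul_add_of_forall_le hΦtail_ge hΨ_ge, hΨ,
      coeff_sum_single_of_injOn hζ.injective.injOn (by simp [P]),
      coeff_sum_single_of_injOn hκ.injective.injOn (mem_univ k₀)]
  have hleast := isLeast_support_ne_of_eq_add hsplit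
    (sum_nonneg fun l _ => mul_nonneg (hφ l).le (hΨ ▸ coeff_sum_single_nonneg
      (fun k _ => (hψ k).le) _))
    (hlowest ▸ mul_pos (hφ P) (hψ k₀))
    fun x hx => add_le_of_mem_support_mul hΦtail_ge hΨ_ge (Finsupp.mem_support_iff.2 hx)
  refine ⟨hleast.nonempty, hleast, ?_⟩
  rw [eq_div_iff (hψ k₀).ne', ← hlowest, hsplit, add_sub_cancel_left]

/-- General step of the singular-part recursion: with the leaf-peeling singular
data and `A = Φ * Ψ`, for every `p` with `1 ≤ p < L` (so that the zero-based
pairs `(φ₀,ζ₀),…,(φ_{p-1},ζ_{p-1})` are "already recovered"), the set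
`S_p = { x ∈ supp A : A(x) ≠ Σ_{l<p} φₗ·Ψ(x − ζₗ) }` is nonempty, its least
element is `ζ_{p+1} + κ₁` (zero-based: `ζ p + κ 0`), and
`φ_{p+1} = (A(ζ_{p+1}+κ₁) − Σ_{l≤p} φₗ Ψ(ζ_{p+1}+κ₁−ζₗ)) / ψ₁`. -/
theorem singular_recursion_general_step
    (N L K : ℕ) (hN : 0 < N) (hL : 0 < L) (hK : 0 < K)
    (β : Fin N → ℝ) (ζ : Fin L → ℝ) (κ : Fin K → ℝ)
    (hβ : StrictMono β) (hζ : StrictMono ζ) (hκ : StrictMono κ)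
    (α : Fin N → ℝ) (φ : Fin L → ℝ) (ψ : Fin K → ℝ)
    (hα : ∀ n, α n ≠ 0) (hφ : ∀ l, 0 < φ l) (hψ : ∀ k, 0 < ψ k)
    (A Φ Ψ : AddMonoidAlgebra ℝ ℝ)
    (hA : A = ∑ n, AddMonoidAlgebra.single (β n) (α n))
    (hΦ : Φ = ∑ l, AddMonoidAlgebra.single (ζ l) (φ l))
    (hΨ : Ψ = ∑ k, AddMonoidAlgebra.single (κ k) (ψ k))
    (hSing : A = Φ * Ψ)
    (p : ℕ) (hp1 : 1 ≤ p) (hpL : p < L) :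
    (({x : ℝ | x ∈ A.coeff.support ∧
        A.coeff x ≠ ∑ l ∈ Finset.univ.filter (fun l : Fin L => (l : ℕ) < p),
          φ l * Ψ.coeff (x - ζ l)} : Set ℝ).Nonempty) ∧
    IsLeast {x : ℝ | x ∈ A.coeff.support ∧
        A.coeff x ≠ ∑ l ∈ Finset.univ.filter (fun l : Fin L => (l : ℕ) < p),
          φ l * Ψ.coeff (x - ζ l)}
      (ζ ⟨p, hpL⟩ + κ ⟨0, hK⟩) ∧
    φ ⟨p, hpL⟩ =
      (A.coeff (ζ ⟨p, hpL⟩ + κ ⟨0, hK⟩) -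
        ∑ l ∈ Finset.univ.filter (fun l : Fin L => (l : ℕ) < p),
          φ l * Ψ.coeff (ζ ⟨p, hpL⟩ + κ ⟨0, hK⟩ - ζ l)) / ψ ⟨0, hK⟩ :=
  singular_recursion_general_step_general L K hK ζ κ hζ hκ φ ψ hφ hψ A Φ Ψ hΦ hΨ hSing p hpL
end
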